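/- Let ω = exp(2πi/3) and let S₆ be the 6×6 matrix with rows (1,1,1,1,1,1), (1,1,ω,ω,ω²,ω²), (1,ω,1,ω²,ω²,ω), (1,ω,ω²,1,ω,ω²), (1,ω²,ω²,ω,1,ω), (1,ω²,ω,ω²,ω,1). Then S₆ is a dephased symmetric complex Hadamard matrix of order 6 whose every entry is a cube root of unity (i.e. S₆ is of Butson type H(3,6)). -/

import Mathlib

open Matrix

/-- A complex Hadamard matrix: all entries of modulus one, and `H * Hᴴ = N • 1`. -/
def IsComplexHadamard {n : Type*} [Fintype n] [DecidableEq n] (H : Matrix n n ℂ) : Prop :=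
  (∀ i j, ‖H i j‖ = 1) ∧
    H * H.conjTranspose = (Fintype.card n : ℂ) • (1 : Matrix n n ℂ)

/-- Dephased w.r.t. the distinguished index `i0`. -/
def IsDephased {n : Type*} (H : Matrix n n ℂ) (i0 : n) : Prop :=
  (∀ j, H i0 j = 1) ∧ (∀ i, H i i0 = 1)

/-- The cube root of unity `ω = exp(2πi/3)`. -/
noncomputable def omega3 : ℂ := Complex.exp (2 * (Real.pi : ℂ) * Complex.I / 3)

/-- Tao's spectral-set matrix `S₆`. -/
noncomputable def S6 : Matrix (Fin 6) (Fin 6) ℂ :=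
  !![1, 1, 1, 1, 1, 1;
     1, 1, omega3, omega3, omega3 ^ 2, omega3 ^ 2;
     1, omega3, 1, omega3 ^ 2, omega3 ^ 2, omega3;
     1, omega3, omega3 ^ 2, 1, omega3, omega3 ^ 2;
     1, omega3 ^ 2, omega3 ^ 2, omega3, 1, omega3;
     1, omega3 ^ 2, omega3, omega3 ^ 2, omega3, 1]

lemma omega3_pow_three : omega3 ^ 3 = 1 := by
  rw [omega3, ← Complex.exp_nat_mul]
  norm_num
  rw [show (3:ℂ) * (2 * (Real.pi : ℂ) * Complex.I / 3) = 2 * Real.pi * Complex.I by ring]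
  exact Complex.exp_two_pi_mul_I

lemma omega3_abs : ‖omega3‖ = 1 := by
  rw [omega3, Complex.norm_exp]
  norm_num [Complex.div_re, Complex.mul_re]

lemma omega3_conj : (starRingEnd ℂ) omega3 = omega3 ^ 2 := by
  have key : -(2 * (Real.pi : ℂ) * Complex.I / 3) =
      2 * (Real.pi : ℂ) * Complex.I / 3 + 2 * (Real.pi : ℂ) * Complex.I / 3
        + -(2 * Real.pi * Complex.I) := by ring
  rw [omega3, ← Complex.exp_conj]
  have hc : (starRingEnd ℂ) (2 * (Real.pi : ℂ) * Complex.I / 3) =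
      -(2 * (Real.pi : ℂ) * Complex.I / 3) := by
    have h2 : (starRingEnd ℂ) (2:ℂ) = 2 := map_ofNat _ 2
    have h3' : (starRingEnd ℂ) (3:ℂ) = 3 := map_ofNat _ 3
    rw [map_div₀, _root_.map_mul, _root_.map_mul, h2, h3', Complex.conj_I, Complex.conj_ofReal]
    ring
  rw [hc, key, Complex.exp_add, Complex.exp_add, Complex.exp_neg,
    Complex.exp_two_pi_mul_I, inv_one, mul_one, sq]

lemma omega3_ne_one : omega3 ≠ 1 := by
  rw [omega3]
  intro hone
  rw [Complex.exp_eq_one_iff] at hone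
  obtain ⟨n, h⟩ := hone
  have hπ := Real.pi_ne_zero
  have : (n : ℂ) * 3 = 1 := by
    field_simp at h
    have h2 : ((2:ℂ) * Real.pi * Complex.I) * ((n:ℂ) * 3) = (2 * Real.pi * Complex.I) * 1 := by
      rw [mul_one]; linear_combination (-(2 * (Real.pi : ℂ) * Complex.I)) * h
    have hnz : (2:ℂ) * Real.pi * Complex.I ≠ 0 := by
      simp [Complex.ext_iff, hπ, Complex.I_ne_zero]
    exact mul_left_cancel₀ hnz h2
  have hc : ((n * 3 : ℤ) : ℂ) = ((1:ℤ) : ℂ) := by push_cast; exact this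
  have := Int.cast_injective hc
  omega

lemma omega3_sum : omega3 ^ 2 + omega3 + 1 = 0 := by
  have factored : (omega3 - 1) * (omega3 ^ 2 + omega3 + 1) = 0 := by
    linear_combination omega3_pow_three
  rcases mul_eq_zero.mp factored with h1 | h2
  · exact absurd (sub_eq_zero.mp h1) omega3_ne_one
  · exact h2

lemma cons_val_five' {α : Type*} {m : ℕ} (x : α) (u : Fin m.succ.succ.succ.succ.succ → α) :
    Matrix.vecCons x u 5 =
      Matrix.vecHead (Matrix.vecTail (Matrix.vecTail (Matrix.vecTail (Matrix.vecTail u)))) :=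
  rfl

set_option maxHeartbeats 1600000 in
/-- `S₆` is a dephased symmetric complex Hadamard matrix of order `6`
all of whose entries are cube roots of unity, i.e. it is of Butson type `H(3,6)`. -/
theorem S6_hadamard :
    IsComplexHadamard S6 ∧ IsDephased S6 0 ∧ S6ᵀ = S6 ∧
    (∀ i j : Fin 6, (S6 i j) ^ 3 = 1) := by
  have h3 := omega3_pow_three
  have hsum := omega3_sum
  have hconj := omega3_conj
  have habs := omega3_abs
  have habs2 : ‖omega3 ^ 2‖ = 1 := by rw [norm_pow, habs, one_pow]
  refine ⟨⟨?_, ?_⟩, ⟨?_, ?_⟩, ?_, ?_⟩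
  · intro i j
    fin_cases i <;> fin_cases j <;>
      simp [S6, cons_val_five', habs, habs2] <;>
      norm_num [Matrix.vecHead, Matrix.vecTail, habs, habs2]
  · ext i j
    fin_cases i <;> fin_cases j <;>
      simp [Matrix.mul_apply, Fin.sum_univ_six, S6, Matrix.conjTranspose_apply,
        hconj, Matrix.one_apply, cons_val_five'] <;>
      first
        | linear_combination 2 * hsum
        | linear_combination (2 - 2*omega3 + 2*omega3^2) * hsum
        | linear_combination (-4 + 4*omega3 - 2*omega3^3 + 2*omega3^4) * hsum
        | linear_combination (1 + omega3^4) * hsum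
        | linear_combination (1 - omega3 + omega3^2 + omega3^3) * hsum
        | (norm_num [Matrix.vecHead, Matrix.vecTail]; done)
        | (norm_num [Matrix.vecHead, Matrix.vecTail] <;>
            first
              | linear_combination 2 * hsum
              | linear_combination (2 - 2*omega3 + 2*omega3^2) * hsum
              | linear_combination (-4 + 4*omega3 - 2*omega3^3 + 2*omega3^4) * hsum
              | linear_combination (1 + omega3^4) * hsum
              | linear_combination (1 - omega3 + omega3^2 + omega3^3) * hsum)
  · intro j
    fin_cases j <;> simp [S6, cons_val_five'] <;>
      norm_num [Matrix.vecHead, Matrix.vecTail]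
  · intro i
    fin_cases i <;> simp [S6, cons_val_five'] <;>
      norm_num [Matrix.vecHead, Matrix.vecTail]
  · ext i j
    fin_cases i <;> fin_cases j <;>
      simp [S6, Matrix.transpose_apply, cons_val_five'] <;>
      norm_num [Matrix.vecHead, Matrix.vecTail]
  · intro i j
    fin_cases i <;> fin_cases j <;>
      simp [S6, cons_val_five'] <;>
      first
        | linear_combination h3
        | linear_combination (omega3^3 + 1) * h3
        | (norm_num [Matrix.vecHead, Matrix.vecTail]; done)
        | (norm_num [Matrix.vecHead, Matrix.vecTail] <;>
            first
              | linear_combination h3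
              | linear_combination (omega3^3 + 1) * h3)
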